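/- For every s > 0: the s-dimensional lower quantization coefficient Q̲_r^s(μ) is positive if and only if liminf_{j→∞} φ_{j,r}^{r/s} e_{φ_{j,r},r}(μ)^r > 0; and the s-dimensional upper quantization coefficient Q̄_r^s(μ) is finite if and only if limsup_{j→∞} φ_{j,r}^{r/s} e_{φ_{j,r},r}(μ)^r < ∞. -/

import Mathlib

open Filter MeasureTheory
open scoped ENNReal

namespace QM

/-- A finite word is admissible w.r.t. `P` if consecutive transition probabilities
are positive. -/
def Adm {N : ℕ} (P : Matrix (Fin N) (Fin N) ℝ) (σ : List (Fin N)) : Prop :=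
  List.Chain' (fun a b => 0 < P a b) σ

/-- An infinite word is admissible if all consecutive transition probabilities are positive. -/
def AdmInf {N : ℕ} (P : Matrix (Fin N) (Fin N) ℝ) (τ : ℕ → Fin N) : Prop :=
  ∀ h : ℕ, 0 < P (τ h) (τ (h + 1))

/-- `wprod M σ = M σ₁ σ₂ * ⋯ * M σ_{k-1} σ_k`; equals `1` when `σ` has length at most 1. -/
noncomputable def wprod {N : ℕ} (M : Matrix (Fin N) (Fin N) ℝ) (σ : List (Fin N)) : ℝ :=
  ((σ.zip σ.tail).map fun x => M x.1 x.2).prod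

/-- Spectral radius of a real square matrix: the largest modulus of a complex eigenvalue. -/
noncomputable def specRad {ι : Type} [Fintype ι] [DecidableEq ι] (A : Matrix ι ι ℝ) : ℝ :=
  sSup {x : ℝ | ∃ z : ℂ,
    Module.End.HasEigenvalue (Matrix.toLin' (A.map (fun t => (t : ℂ)))) z ∧ x = ‖z‖}

/-- The matrix `A_{G,s}` with entries `(p_{ij} c_{ij}^r)^{s/(s+r)}` (zero when `p_{ij} = 0`). -/
noncomputable def AGs {N : ℕ} (P c : Matrix (Fin N) (Fin N) ℝ) (r s : ℝ) :
    Matrix (Fin N) (Fin N) ℝ :=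
  Matrix.of fun i j => if 0 < P i j then (P i j * c i j ^ r) ^ (s / (s + r)) else 0

/-- `Ψ_G(s)`, the spectral radius of `A_{G,s}`. -/
noncomputable def PsiG {N : ℕ} (P c : Matrix (Fin N) (Fin N) ℝ) (r s : ℝ) : ℝ :=
  specRad (AGs P c r s)

/-- The submatrix of `A_{G,s}` with rows and columns in `H`. -/
noncomputable def AHs {N : ℕ} (P c : Matrix (Fin N) (Fin N) ℝ) (r s : ℝ)
    (H : Finset (Fin N)) : Matrix {i // i ∈ H} {i // i ∈ H} ℝ :=
  Matrix.of fun i j => AGs P c r s i.1 j.1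

/-- `Ψ_H(s)`, the spectral radius of `A_{H,s}`. -/
noncomputable def PsiH {N : ℕ} (P c : Matrix (Fin N) (Fin N) ℝ) (r s : ℝ)
    (H : Finset (Fin N)) : ℝ :=
  specRad (AHs P c r s H)

/-- Edge relation of the directed graph `G` associated with `P`. -/
def Edge {N : ℕ} (P : Matrix (Fin N) (Fin N) ℝ) (i j : Fin N) : Prop := 0 < P i j

/-- Reachability along directed paths all of whose vertices lie in `S`. -/
def ReachIn {N : ℕ} (P : Matrix (Fin N) (Fin N) ℝ) (S : Set (Fin N)) (i j : Fin N) : Prop :=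
  Relation.ReflTransGen (fun a b => Edge P a b ∧ a ∈ S ∧ b ∈ S) i j

/-- A set of vertices is strongly connected (with the inherited edges). -/
def StrConn {N : ℕ} (P : Matrix (Fin N) (Fin N) ℝ) (S : Set (Fin N)) : Prop :=
  ∀ i ∈ S, ∀ j ∈ S, ReachIn P S i j

/-- `H` is a strongly connected component of `G` containing at least one edge. -/
def IsSCC {N : ℕ} (P : Matrix (Fin N) (Fin N) ℝ) (H : Finset (Fin N)) : Prop :=
  StrConn P ↑H ∧ (∀ S : Finset (Fin N), H ⊆ S → StrConn P ↑S → S = H) ∧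
    ∃ i ∈ H, ∃ j ∈ H, Edge P i j

/-- `H₁ ≺ H₂` : some vertex of `H₂` can be reached from some vertex of `H₁` by a
directed path in `G`. -/
def Prec {N : ℕ} (P : Matrix (Fin N) (Fin N) ℝ) (H₁ H₂ : Finset (Fin N)) : Prop :=
  ∃ i ∈ H₁, ∃ j ∈ H₂, Relation.ReflTransGen (Edge P) i j

/-- Irreducibility of `P` : the graph `G` is strongly connected. -/
def Irred {N : ℕ} (P : Matrix (Fin N) (Fin N) ℝ) : Prop :=
  ∀ i j : Fin N, Relation.TransGen (Edge P) i j

/-- `Γ` is a finite maximal antichain in `Ω^*`. -/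
def IsMaxAntichain {N : ℕ} (P : Matrix (Fin N) (Fin N) ℝ) (Γ : Finset (List (Fin N))) : Prop :=
  (∀ σ ∈ Γ, σ ≠ [] ∧ Adm P σ) ∧
    (∀ σ ∈ Γ, ∀ ω ∈ Γ, σ ≠ ω → ¬ σ <+: ω) ∧
    ∀ τ : ℕ → Fin N, AdmInf P τ → ∃ k : ℕ, 0 < k ∧ (List.range k).map τ ∈ Γ

/-- `Γ` is a finite maximal antichain in `H^*`. -/
def IsMaxAntichainIn {N : ℕ} (P : Matrix (Fin N) (Fin N) ℝ) (H : Finset (Fin N))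
    (Γ : Finset (List (Fin N))) : Prop :=
  (∀ σ ∈ Γ, σ ≠ [] ∧ Adm P σ ∧ ∀ a ∈ σ, a ∈ H) ∧
    (∀ σ ∈ Γ, ∀ ω ∈ Γ, σ ≠ ω → ¬ σ <+: ω) ∧
    ∀ τ : ℕ → Fin N, AdmInf P τ → (∀ h, τ h ∈ H) → ∃ k : ℕ, 0 < k ∧ (List.range k).map τ ∈ Γ

/-- `Γ` is a finite maximal antichain in `H^*(i)`. -/
def IsMaxAntichainInAt {N : ℕ} (P : Matrix (Fin N) (Fin N) ℝ) (H : Finset (Fin N)) (i : Fin N)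
    (Γ : Finset (List (Fin N))) : Prop :=
  (∀ σ ∈ Γ, σ ≠ [] ∧ Adm P σ ∧ (∀ a ∈ σ, a ∈ H) ∧ σ.head? = some i) ∧
    (∀ σ ∈ Γ, ∀ ω ∈ Γ, σ ≠ ω → ¬ σ <+: ω) ∧
    ∀ τ : ℕ → Fin N, AdmInf P τ → (∀ h, τ h ∈ H) → τ 0 = i →
      ∃ k : ℕ, 0 < k ∧ (List.range k).map τ ∈ Γ

/-- The `n`-th quantization error of order `r` for a measure on `ℝ^q`. -/
noncomputable def quantErr {q : ℕ} (ν : Measure (EuclideanSpace ℝ (Fin q))) (r : ℝ)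
    (n : ℕ) : ℝ :=
  sInf {e : ℝ | ∃ α : Finset (EuclideanSpace ℝ (Fin q)), α.Nonempty ∧ α.card ≤ n ∧
    e = (∫ x, Metric.infDist x (↑α : Set (EuclideanSpace ℝ (Fin q))) ^ r ∂ν) ^ (1 / r)}

/-- The `s`-dimensional upper quantization coefficient of order `r`,
`limsup_n n^{r/s} e_{n,r}^r`. -/
noncomputable def upperQCoeff {q : ℕ} (ν : Measure (EuclideanSpace ℝ (Fin q)))
    (r s : ℝ) : ℝ≥0∞ :=
  Filter.limsup (fun n : ℕ => ENNReal.ofReal ((n : ℝ) ^ (r / s) * quantErr ν r n ^ r))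
    Filter.atTop

/-- The `s`-dimensional lower quantization coefficient of order `r`,
`liminf_n n^{r/s} e_{n,r}^r`. -/
noncomputable def lowerQCoeff {q : ℕ} (ν : Measure (EuclideanSpace ℝ (Fin q)))
    (r s : ℝ) : ℝ≥0∞ :=
  Filter.liminf (fun n : ℕ => ENNReal.ofReal ((n : ℝ) ^ (r / s) * quantErr ν r n ^ r))
    Filter.atTop

/-- The upper quantization dimension of order `r`. -/
noncomputable def upperQDim {q : ℕ} (ν : Measure (EuclideanSpace ℝ (Fin q))) (r : ℝ) : ℝ :=
  Filter.limsup (fun n : ℕ => Real.log n / (- Real.log (quantErr ν r n))) Filter.atTop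

/-- The lower quantization dimension of order `r`. -/
noncomputable def lowerQDim {q : ℕ} (ν : Measure (EuclideanSpace ℝ (Fin q))) (r : ℝ) : ℝ :=
  Filter.liminf (fun n : ℕ => Real.log n / (- Real.log (quantErr ν r n))) Filter.atTop

/-- `η = min {p_{ij} c_{ij}^r : p_{ij} > 0}`. -/
noncomputable def eta {N : ℕ} (P c : Matrix (Fin N) (Fin N) ℝ) (r : ℝ) : ℝ :=
  sInf {x : ℝ | ∃ i j, 0 < P i j ∧ x = P i j * c i j ^ r}

/-- The finite maximal antichain `Λ_{j,r}`. -/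
def Lambda {N : ℕ} (P c : Matrix (Fin N) (Fin N) ℝ) (r : ℝ) (j : ℕ) : Set (List (Fin N)) :=
  {σ | σ ≠ [] ∧ Adm P σ ∧
    eta P c r ^ j ≤ wprod P σ.dropLast * wprod c σ.dropLast ^ r ∧
    wprod P σ * wprod c σ ^ r < eta P c r ^ j}

/-- `φ_{j,r}`, the cardinality of `Λ_{j,r}`. -/
noncomputable def phi {N : ℕ} (P c : Matrix (Fin N) (Fin N) ℝ) (r : ℝ) (j : ℕ) : ℕ :=
  (Lambda P c r j).ncard

end QM

/-! The products `p_σ c_σ^r` shrink by a factor between `η` and `ρ < 1` with each letter,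
`ρ` being the largest edge weight. So every word of `Λ_{j+1}` extends a word of `Λ_j` by at most
`K` letters, where `ρ^K < η`, which gives `φ_{j+1} ≤ D φ_j` with `D` the number of words of length
at most `K`; and `φ_j ≥ 2^{j+2}` because every vertex has two successors. For
`φ_j ≤ n ≤ φ_{j+1}`, monotonicity of `e_{n,r}` makes `n^{r/s} e_{n,r}^r` comparable, up to the
factor `D^{r/s}`, with its values at `φ_j` and at `φ_{j+1}`, and both equivalences follow. -/

namespace QM

variable {N : ℕ}

lemma prefix_dropLast_of_prefix_of_ne {α : Type*} {ω σ : List α} (h : ω <+: σ) (hne : ω ≠ σ) :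
    ω <+: σ.dropLast := by
  have hlt : ω.length < σ.length := lt_of_le_of_ne h.length_le fun e => hne (h.eq_of_length e)
  rw [List.dropLast_eq_take]
  exact List.prefix_take_iff.2 ⟨h, by omega⟩

section Words

variable {P M : Matrix (Fin N) (Fin N) ℝ}

lemma adm_nil : Adm P [] := List.isChain_nil

lemma adm_cons_cons {a b : Fin N} {l : List (Fin N)} :
    Adm P (a :: b :: l) ↔ 0 < P a b ∧ Adm P (b :: l) :=
  List.isChain_cons_cons

lemma adm_split {l₁ l₂ : List (Fin N)} {c : Fin N} :
    Adm P (l₁ ++ c :: l₂) ↔ Adm P (l₁ ++ [c]) ∧ Adm P (c :: l₂) :=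
  List.isChain_split

lemma Adm.of_prefix {σ ω : List (Fin N)} (h : Adm P σ) (hω : ω <+: σ) : Adm P ω :=
  List.IsChain.prefix h hω

lemma adm_append_singleton {σ : List (Fin N)} {x : Fin N} (hσ : Adm P σ)
    (hx : ∀ a ∈ σ.getLast?, 0 < P a x) : Adm P (σ ++ [x]) :=
  List.isChain_append.2 ⟨hσ, List.isChain_singleton x, fun a ha y hy => by
    rw [List.head?_cons, Option.mem_some_iff] at hy
    exact hy ▸ hx a ha⟩

@[simp] lemma wprod_nil : wprod M [] = 1 := rfl

@[simp] lemma wprod_singleton (a : Fin N) : wprod M [a] = 1 := rfl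

@[simp] lemma wprod_cons_cons (a b : Fin N) (l : List (Fin N)) :
    wprod M (a :: b :: l) = M a b * wprod M (b :: l) := by
  simp [wprod]

lemma wprod_split (l₁ l₂ : List (Fin N)) (c : Fin N) :
    wprod M (l₁ ++ c :: l₂) = wprod M (l₁ ++ [c]) * wprod M (c :: l₂) := by
  induction l₁ with
  | nil => simp
  | cons a l ih =>
    cases l with
    | nil => simp
    | cons b l =>
      simp only [List.cons_append, wprod_cons_cons] at ih ⊢
      rw [ih, mul_assoc]

lemma wprod_nonneg (hM : ∀ i j, 0 < P i j → 0 ≤ M i j) :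
    ∀ {σ : List (Fin N)}, Adm P σ → 0 ≤ wprod M σ
  | [], _ | [_], _ => zero_le_one
  | a :: b :: l, h => by
    rw [adm_cons_cons] at h
    rw [wprod_cons_cons]
    exact mul_nonneg (hM a b h.1) (wprod_nonneg hM h.2)

lemma wprod_le_pow {b : ℝ} (hM : ∀ i j, 0 < P i j → 0 ≤ M i j ∧ M i j ≤ b) :
    ∀ {σ : List (Fin N)}, Adm P σ → wprod M σ ≤ b ^ (σ.length - 1)
  | [], _ | [_], _ => by simp
  | a :: a' :: l, h => by
    obtain ⟨haa', hl⟩ := adm_cons_cons.1 h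
    have ih := wprod_le_pow hM hl
    simp only [wprod_cons_cons, List.length_cons, Nat.add_sub_cancel, pow_succ'] at ih ⊢
    exact mul_le_mul (hM a a' haa').2 ih (wprod_nonneg (fun i j h => (hM i j h).1) hl)
      ((hM a a' haa').1.trans (hM a a' haa').2)

lemma pow_le_wprod {a : ℝ} (ha : 0 ≤ a) (hM : ∀ i j, 0 < P i j → a ≤ M i j) :
    ∀ {σ : List (Fin N)}, Adm P σ → a ^ (σ.length - 1) ≤ wprod M σ
  | [], _ | [_], _ => by simp
  | b :: b' :: l, h => by
    obtain ⟨hbb', hl⟩ := adm_cons_cons.1 h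
    have ih := pow_le_wprod ha hM hl
    simp only [wprod_cons_cons, List.length_cons, Nat.add_sub_cancel, pow_succ'] at ih ⊢
    exact mul_le_mul (hM b b' hbb') ih (pow_nonneg ha _) (ha.trans (hM b b' hbb'))

lemma wprod_le_mul_pow_of_prefix {b : ℝ} (hM : ∀ i j, 0 < P i j → 0 ≤ M i j ∧ M i j ≤ b)
    {σ ω : List (Fin N)} (hσ : Adm P σ) (hω : ω <+: σ) (hne : ω ≠ []) :
    wprod M σ ≤ wprod M ω * b ^ (σ.length - ω.length) := by
  obtain ⟨τ, rfl⟩ := hω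
  obtain ⟨l, c, rfl⟩ := (List.eq_nil_or_concat' ω).resolve_left hne
  rw [List.append_assoc, List.singleton_append] at hσ ⊢
  rw [wprod_split]
  have hτ := wprod_le_pow hM (adm_split.1 hσ).2
  have hlen : (l ++ c :: τ).length - (l ++ [c]).length = (c :: τ).length - 1 := by simp; omega
  rw [hlen]
  exact mul_le_mul_of_nonneg_left hτ (wprod_nonneg (fun i j h => (hM i j h).1) (adm_split.1 hσ).1)

lemma exists_adm_cons_length (hsucc : ∀ i, ∃ j, 0 < P i j) (m : ℕ) (c : Fin N) :
    ∃ τ : List (Fin N), τ.length = m ∧ Adm P (c :: τ) := by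
  induction m generalizing c with
  | zero => exact ⟨[], rfl, List.isChain_singleton c⟩
  | succ m ih =>
    obtain ⟨b, hb⟩ := hsucc c
    obtain ⟨τ, hlen, hτ⟩ := ih b
    exact ⟨b :: τ, by simp [hlen], adm_cons_cons.2 ⟨hb, hτ⟩⟩

/-- `Ω_m` in the paper, for `m ≥ 1`. -/
def admWords (P : Matrix (Fin N) (Fin N) ℝ) (m : ℕ) : Set (List (Fin N)) :=
  {σ | σ.length = m ∧ Adm P σ}

lemma admWords_finite (m : ℕ) : (admWords P m).Finite :=
  (List.finite_length_eq (Fin N) m).subset fun _ h => h.1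

lemma two_pow_le_ncard_admWords [NeZero N]
    (hbranch : ∀ i, ∃ a b, 0 < P i a ∧ 0 < P i b ∧ a ≠ b) (m : ℕ) :
    2 ^ m ≤ (admWords P m).ncard := by
  choose u v hu hv huv using hbranch
  induction m with
  | zero => exact (Set.ncard_pos (admWords_finite 0)).2 ⟨[], rfl, adm_nil⟩
  | succ m ih =>
    let child : List (Fin N) × Bool → List (Fin N) := fun p =>
      p.1 ++ [if p.2 then u (p.1.getLastD 0) else v (p.1.getLastD 0)]
    have hmaps : ∀ p ∈ admWords P m ×ˢ Set.univ, child p ∈ admWords P (m + 1) := by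
      rintro ⟨σ, b⟩ ⟨⟨hlen, hσ⟩, -⟩
      refine ⟨by simp [child, hlen], adm_append_singleton hσ fun a ha => ?_⟩
      rw [Option.mem_def] at ha
      have hlast : σ.getLastD 0 = a := by rw [List.getLastD_eq_getLast?, ha, Option.getD_some]
      show 0 < P a (if b then u (σ.getLastD 0) else v (σ.getLastD 0))
      rw [hlast]
      cases b <;> simp [hu, hv]
    have hinj : Set.InjOn child (admWords P m ×ˢ Set.univ) := by
      rintro ⟨σ, b⟩ - ⟨σ', b'⟩ - heq
      obtain ⟨rfl, hlast⟩ := List.append_inj' heq rfl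
      cases b <;> cases b' <;> simp_all [child, (huv _).symm]
    calc 2 ^ (m + 1) ≤ (admWords P m).ncard * 2 := Nat.mul_le_mul_right 2 ih
      _ = (admWords P m ×ˢ (Set.univ : Set Bool)).ncard := by
        rw [Set.ncard_prod, Set.ncard_univ, Nat.card_eq_fintype_card, Fintype.card_bool]
      _ ≤ (admWords P (m + 1)).ncard :=
        Set.ncard_le_ncard_of_injOn child hmaps hinj (admWords_finite _)

end Words

section EdgeWeight

variable {P c : Matrix (Fin N) (Fin N) ℝ} {r : ℝ}

noncomputable def edgeWeight (P c : Matrix (Fin N) (Fin N) ℝ) (r : ℝ) : Matrix (Fin N) (Fin N) ℝ :=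
  Matrix.of fun i j => P i j * c i j ^ r

lemma wprod_mul_wprod_rpow (hc : ∀ i j, 0 < P i j → 0 ≤ c i j) :
    ∀ {σ : List (Fin N)}, Adm P σ → wprod P σ * wprod c σ ^ r = wprod (edgeWeight P c r) σ
  | [], _ | [_], _ => by simp
  | a :: b :: l, h => by
    obtain ⟨hab, hl⟩ := adm_cons_cons.1 h
    rw [wprod_cons_cons, wprod_cons_cons, wprod_cons_cons, ← wprod_mul_wprod_rpow hc hl,
      Real.mul_rpow (hc a b hab) (wprod_nonneg hc hl), edgeWeight, Matrix.of_apply]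
    ring

lemma finite_edgeWeights :
    {x : ℝ | ∃ i j, 0 < P i j ∧ x = P i j * c i j ^ r}.Finite :=
  (Set.finite_range fun p : Fin N × Fin N => P p.1 p.2 * c p.1 p.2 ^ r).subset
    fun _ ⟨i, j, _, hx⟩ => ⟨(i, j), hx.symm⟩

lemma eta_le_edgeWeight {i j : Fin N} (h : 0 < P i j) : eta P c r ≤ edgeWeight P c r i j :=
  csInf_le finite_edgeWeights.bddBelow ⟨i, j, h, rfl⟩

lemma eta_pos (hc : ∀ i j, 0 < P i j → 0 < c i j) (hedge : ∃ i j, 0 < P i j) :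
    0 < eta P c r := by
  obtain ⟨i, j, hij⟩ := hedge
  obtain ⟨i', j', hij', heq⟩ : eta P c r ∈ _ :=
    Set.Nonempty.csInf_mem ⟨_, i, j, hij, rfl⟩ finite_edgeWeights
  rw [heq]
  exact mul_pos hij' (Real.rpow_pos_of_pos (hc i' j' hij') r)

lemma mem_Lambda_iff (hc : ∀ i j, 0 < P i j → 0 ≤ c i j) {j : ℕ} {σ : List (Fin N)} :
    σ ∈ Lambda P c r j ↔ σ ≠ [] ∧ Adm P σ ∧
      eta P c r ^ j ≤ wprod (edgeWeight P c r) σ.dropLast ∧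
      wprod (edgeWeight P c r) σ < eta P c r ^ j := by
  refine and_congr_right fun _ => ⟨fun ⟨hσ, h⟩ => ⟨hσ, ?_⟩, fun ⟨hσ, h⟩ => ⟨hσ, ?_⟩⟩ <;>
    rwa [← wprod_mul_wprod_rpow hc hσ, ← wprod_mul_wprod_rpow hc
      (hσ.of_prefix σ.dropLast_prefix)] at *

structure WeightBounds (P c : Matrix (Fin N) (Fin N) ℝ) (r ρ : ℝ) : Prop where
  c_nonneg : ∀ i j, 0 < P i j → 0 ≤ c i j
  eta_pos : 0 < eta P c r
  edgeWeight_le : ∀ i j, 0 < P i j → edgeWeight P c r i j ≤ ρ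
  rho_lt_one : ρ < 1

lemma edgeWeight_lt_one (hr : 0 < r) (hP0 : ∀ i j, 0 ≤ P i j) (hProw : ∀ i, ∑ j, P i j = 1)
    (hc1 : ∀ i j, 0 < P i j → 0 < c i j ∧ c i j < 1) {i j : Fin N} (h : 0 < P i j) :
    edgeWeight P c r i j < 1 := by
  have hP1 : P i j ≤ 1 :=
    hProw i ▸ Finset.single_le_sum (fun k _ => hP0 i k) (Finset.mem_univ j)
  have hc := hc1 i j h
  calc P i j * c i j ^ r < 1 * 1 :=
        mul_lt_mul' hP1 (Real.rpow_lt_one hc.1.le hc.2 hr) (Real.rpow_nonneg hc.1.le r) one_pos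
    _ = 1 := one_mul 1

lemma exists_weightBounds (hr : 0 < r) (hP0 : ∀ i j, 0 ≤ P i j) (hProw : ∀ i, ∑ j, P i j = 1)
    (hc1 : ∀ i j, 0 < P i j → 0 < c i j ∧ c i j < 1) (hedge : ∃ i j, 0 < P i j) :
    ∃ ρ, WeightBounds P c r ρ := by
  classical
  let edges := Finset.univ.filter fun p : Fin N × Fin N => 0 < P p.1 p.2
  have hne : edges.Nonempty :=
    let ⟨i, j, h⟩ := hedge
    ⟨(i, j), by simpa [edges] using h⟩
  obtain ⟨p, hp, hmax⟩ := edges.exists_max_image (fun p => edgeWeight P c r p.1 p.2) hne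
  exact ⟨edgeWeight P c r p.1 p.2, fun i j h => (hc1 i j h).1.le,
    eta_pos (fun i j h => (hc1 i j h).1) hedge, fun i j h => hmax (i, j) (by simpa [edges] using h),
    edgeWeight_lt_one hr hP0 hProw hc1 (Finset.mem_filter.1 hp).2⟩

end EdgeWeight

namespace WeightBounds

variable {P c : Matrix (Fin N) (Fin N) ℝ} {r ρ : ℝ} (hW : WeightBounds P c r ρ)
include hW

lemma exists_edge : ∃ i j, 0 < P i j := by
  by_contra h
  have hempty : {x : ℝ | ∃ i j, 0 < P i j ∧ x = P i j * c i j ^ r} = ∅ :=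
    Set.eq_empty_of_forall_notMem fun _ ⟨i, j, hij, _⟩ => h ⟨i, j, hij⟩
  have := hW.eta_pos
  rw [eta, hempty, Real.sInf_empty] at this
  exact this.false

lemma edgeWeight_nonneg_le (i j : Fin N) (h : 0 < P i j) :
    0 ≤ edgeWeight P c r i j ∧ edgeWeight P c r i j ≤ ρ :=
  ⟨hW.eta_pos.le.trans (eta_le_edgeWeight h), hW.edgeWeight_le i j h⟩

lemma eta_lt_one : eta P c r < 1 := by
  obtain ⟨i, j, h⟩ := hW.exists_edge
  exact (eta_le_edgeWeight h).trans_lt ((hW.edgeWeight_le i j h).trans_lt hW.rho_lt_one)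

lemma rho_pos : 0 < ρ := by
  obtain ⟨i, j, h⟩ := hW.exists_edge
  exact hW.eta_pos.trans_le ((eta_le_edgeWeight h).trans (hW.edgeWeight_le i j h))

lemma exists_prefix_mem_Lambda {j : ℕ} {σ : List (Fin N)} (hσ : Adm P σ)
    (hlt : wprod (edgeWeight P c r) σ < eta P c r ^ j) :
    ∃ ω, ω <+: σ ∧ ω ∈ Lambda P c r j := by
  induction σ using List.reverseRecOn with
  | nil =>
    exact absurd hlt (not_lt.2 (pow_le_one₀ hW.eta_pos.le hW.eta_lt_one.le))
  | append_singleton l a ih =>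
    by_cases hge : eta P c r ^ j ≤ wprod (edgeWeight P c r) l
    · refine ⟨l ++ [a], List.prefix_refl _, (mem_Lambda_iff hW.c_nonneg).2 ?_⟩
      exact ⟨by simp, hσ, by rwa [List.dropLast_concat], hlt⟩
    · obtain ⟨ω, hω, hmem⟩ := ih (hσ.of_prefix (List.prefix_append l [a])) (not_le.1 hge)
      exact ⟨ω, hω.trans (List.prefix_append l [a]), hmem⟩

lemma add_two_le_length_of_mem_Lambda {j : ℕ} {σ : List (Fin N)} (hσ : σ ∈ Lambda P c r j) :
    j + 2 ≤ σ.length := by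
  obtain ⟨hne, hadm, -, hlt⟩ := (mem_Lambda_iff hW.c_nonneg).1 hσ
  have hpow : eta P c r ^ (σ.length - 1) < eta P c r ^ j :=
    (pow_le_wprod hW.eta_pos.le (fun _ _ => eta_le_edgeWeight) hadm).trans_lt hlt
  have := (pow_lt_pow_iff_right_of_lt_one₀ hW.eta_pos hW.eta_lt_one).1 hpow
  have := List.length_pos_iff.2 hne
  omega

lemma length_le_of_mem_Lambda {K j : ℕ} (hK : ρ ^ K < eta P c r) {σ : List (Fin N)}
    (hσ : σ ∈ Lambda P c r j) : σ.length ≤ j * K + 2 := by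
  obtain ⟨-, hadm, hge, -⟩ := (mem_Lambda_iff hW.c_nonneg).1 hσ
  by_contra! hlen
  have hdrop := wprod_le_pow hW.edgeWeight_nonneg_le (hadm.of_prefix σ.dropLast_prefix)
  rw [List.length_dropLast] at hdrop
  have : eta P c r ^ j < eta P c r ^ j := calc
    eta P c r ^ j ≤ ρ ^ (σ.length - 1 - 1) := hge.trans hdrop
    _ < ρ ^ (j * K) := pow_lt_pow_right_of_lt_one₀ hW.rho_pos hW.rho_lt_one (by omega)
    _ = (ρ ^ K) ^ j := by rw [← pow_mul, mul_comm]
    _ ≤ eta P c r ^ j := pow_le_pow_left₀ (pow_nonneg hW.rho_pos.le K) hK.le j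
  exact this.false

lemma lambda_finite (j : ℕ) : (Lambda P c r j).Finite := by
  obtain ⟨K, hK⟩ := exists_pow_lt_of_lt_one hW.eta_pos hW.rho_lt_one
  exact (List.finite_length_le (Fin N) (j * K + 2)).subset
    fun _ hσ => hW.length_le_of_mem_Lambda hK hσ
lemma exists_mem_Lambda_of_length_le (hsucc : ∀ i, ∃ j, 0 < P i j) {j : ℕ}
    {σ : List (Fin N)} (hσ : Adm P σ) (hne : σ ≠ []) (hlen : σ.length ≤ j + 2) :
    ∃ ω ∈ Lambda P c r j, σ <+: ω := by
  obtain ⟨m, hm⟩ := exists_pow_lt_of_lt_one (pow_pos hW.eta_pos j) hW.rho_lt_one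
  obtain ⟨l, a, rfl⟩ := (List.eq_nil_or_concat' σ).resolve_left hne
  obtain ⟨τ, hτlen, hτ⟩ := exists_adm_cons_length hsucc m a
  have hext : Adm P (l ++ a :: τ) := adm_split.2 ⟨hσ, hτ⟩
  have hsmall : wprod (edgeWeight P c r) (l ++ a :: τ) < eta P c r ^ j := calc
    _ ≤ ρ ^ ((l ++ a :: τ).length - 1) := wprod_le_pow hW.edgeWeight_nonneg_le hext
    _ ≤ ρ ^ m := pow_le_pow_of_le_one hW.rho_pos.le hW.rho_lt_one.le (by simp; omega)
    _ < eta P c r ^ j := hm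
  obtain ⟨ω, hω, hmem⟩ := hW.exists_prefix_mem_Lambda hext hsmall
  refine ⟨ω, hmem, ?_⟩
  rcases List.prefix_or_prefix_of_prefix (by simp : l ++ [a] <+: l ++ a :: τ) hω with h | h
  · exact h
  · have := hW.add_two_le_length_of_mem_Lambda hmem
    rw [h.eq_of_length (le_antisymm h.length_le (by omega))]

lemma exists_prefix_mem_Lambda_of_mem_Lambda_succ {K j : ℕ} (hK : ρ ^ K < eta P c r)
    {σ : List (Fin N)} (hσ : σ ∈ Lambda P c r (j + 1)) :
    ∃ ω, ω <+: σ ∧ ω ∈ Lambda P c r j ∧ σ.length ≤ ω.length + K := by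
  obtain ⟨hne, hadm, hge, hlt⟩ := (mem_Lambda_iff hW.c_nonneg).1 hσ
  have hlt' : wprod (edgeWeight P c r) σ < eta P c r ^ j :=
    hlt.trans_le (pow_le_pow_of_le_one hW.eta_pos.le hW.eta_lt_one.le j.le_succ)
  obtain ⟨ω, hω, hmem⟩ := hW.exists_prefix_mem_Lambda hadm hlt'
  refine ⟨ω, hω, hmem, ?_⟩
  obtain rfl | hωσ := eq_or_ne ω σ
  · omega
  obtain ⟨hωne, -, -, hωlt⟩ := (mem_Lambda_iff hW.c_nonneg).1 hmem
  have hωdrop := prefix_dropLast_of_prefix_of_ne hω hωσ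
  set m := σ.dropLast.length - ω.length
  have hη : eta P c r * eta P c r ^ j < ρ ^ m * eta P c r ^ j := calc
    eta P c r * eta P c r ^ j = eta P c r ^ (j + 1) := by ring
    _ ≤ wprod (edgeWeight P c r) σ.dropLast := hge
    _ ≤ wprod (edgeWeight P c r) ω * ρ ^ m := wprod_le_mul_pow_of_prefix
        hW.edgeWeight_nonneg_le (hadm.of_prefix σ.dropLast_prefix) hωdrop hωne
    _ < eta P c r ^ j * ρ ^ m := mul_lt_mul_of_pos_right hωlt (pow_pos hW.rho_pos m)
    _ = ρ ^ m * eta P c r ^ j := mul_comm _ _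
  have hm : m < K := (pow_lt_pow_iff_right_of_lt_one₀ hW.rho_pos hW.rho_lt_one).1
    (hK.trans (lt_of_mul_lt_mul_right hη (pow_nonneg hW.eta_pos.le j)))
  have := hωdrop.length_le
  simp only [m, List.length_dropLast] at this hm
  omega

lemma exists_phi_succ_le : ∃ D : ℕ, ∀ j, phi P c r (j + 1) ≤ D * phi P c r j := by
  obtain ⟨K, hK⟩ := exists_pow_lt_of_lt_one hW.eta_pos hW.rho_lt_one
  let T : Set (List (Fin N)) := {τ | τ.length ≤ K}
  refine ⟨T.ncard, fun j => ?_⟩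
  choose! F hFpre hFmem hFlen using fun σ (hσ : σ ∈ Lambda P c r (j + 1)) =>
    hW.exists_prefix_mem_Lambda_of_mem_Lambda_succ hK hσ
  let split : List (Fin N) → List (Fin N) × List (Fin N) := fun σ => (F σ, σ.drop (F σ).length)
  have hmaps : ∀ σ ∈ Lambda P c r (j + 1), split σ ∈ Lambda P c r j ×ˢ T := fun σ hσ =>
    ⟨hFmem σ hσ, by
      show (σ.drop (F σ).length).length ≤ K
      have := hFlen σ hσ
      rw [List.length_drop]
      omega⟩
  have hinj : Set.InjOn split (Lambda P c r (j + 1)) := by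
    intro σ hσ σ' hσ' heq
    simp only [split, Prod.mk.injEq] at heq
    calc σ = F σ ++ σ.drop (F σ).length := (List.prefix_iff_eq_append.1 (hFpre σ hσ)).symm
      _ = F σ' ++ σ'.drop (F σ').length := by rw [heq.2, heq.1]
      _ = σ' := List.prefix_iff_eq_append.1 (hFpre σ' hσ')
  calc phi P c r (j + 1) ≤ (Lambda P c r j ×ˢ T).ncard := Set.ncard_le_ncard_of_injOn split
        hmaps hinj ((hW.lambda_finite j).prod (List.finite_length_le (Fin N) K))
    _ = T.ncard * phi P c r j := by rw [Set.ncard_prod, mul_comm]; rfl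

lemma ncard_admWords_le_phi (hsucc : ∀ i, ∃ j, 0 < P i j) (j : ℕ) :
    (admWords P (j + 2)).ncard ≤ phi P c r j := by
  have hsub : admWords P (j + 2) ⊆ List.take (j + 2) '' Lambda P c r j := by
    rintro σ ⟨hlen, hσ⟩
    obtain ⟨ω, hω, hpre⟩ := hW.exists_mem_Lambda_of_length_le hsucc hσ
      (List.ne_nil_of_length_eq_add_one hlen) hlen.le
    exact ⟨ω, hω, (hlen ▸ List.prefix_iff_eq_take.1 hpre).symm⟩
  exact (Set.ncard_le_ncard hsub ((hW.lambda_finite j).image _)).trans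
    (Set.ncard_image_le (hW.lambda_finite j))

lemma two_pow_le_phi [NeZero N] (hbranch : ∀ i, ∃ a b, 0 < P i a ∧ 0 < P i b ∧ a ≠ b)
    (j : ℕ) : 2 ^ (j + 2) ≤ phi P c r j :=
  (two_pow_le_ncard_admWords hbranch _).trans <| hW.ncard_admWords_le_phi
    (fun i => let ⟨a, _, ha, _⟩ := hbranch i; ⟨a, ha⟩) j

lemma tendsto_phi_atTop [NeZero N] (hbranch : ∀ i, ∃ a b, 0 < P i a ∧ 0 < P i b ∧ a ≠ b) :
    Tendsto (phi P c r) atTop atTop :=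
  tendsto_atTop_mono (fun j => Nat.lt_two_pow_self.le.trans <|
    (Nat.pow_le_pow_right two_pos (j.le_add_right 2)).trans (hW.two_pow_le_phi hbranch j))
    tendsto_id

end WeightBounds

section Quantization

variable {q : ℕ} (ν : Measure (EuclideanSpace ℝ (Fin q))) (r : ℝ)

lemma rpow_integral_infDist_rpow_nonneg (α : Set (EuclideanSpace ℝ (Fin q))) :
    0 ≤ (∫ x, Metric.infDist x α ^ r ∂ν) ^ (1 / r) :=
  Real.rpow_nonneg (integral_nonneg fun _ => Real.rpow_nonneg Metric.infDist_nonneg r) _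

lemma quantErr_nonneg (n : ℕ) : 0 ≤ quantErr ν r n :=
  Real.sInf_nonneg (by rintro _ ⟨α, -, -, rfl⟩; exact rpow_integral_infDist_rpow_nonneg ν r _)

-- Only from `1` on: `quantErr ν r 0` is `sInf ∅ = 0`.
lemma quantErr_antitoneOn : AntitoneOn (quantErr ν r) (Set.Ici 1) := by
  intro m hm n _ hmn
  apply csInf_le_csInf
  · exact ⟨0, by rintro _ ⟨α, -, -, rfl⟩; exact rpow_integral_infDist_rpow_nonneg ν r _⟩
  · exact ⟨_, {0}, Finset.singleton_nonempty 0, by simpa using hm, rfl⟩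
  · rintro _ ⟨α, hα, hcard, rfl⟩
    exact ⟨α, hα, hcard.trans hmn, rfl⟩

end Quantization

section Bracket

lemma exists_tendsto_bracket {φ : ℕ → ℕ} (hφ : Tendsto φ atTop atTop) :
    ∃ ψ : ℕ → ℕ, Tendsto ψ atTop atTop ∧ ∀ᶠ n in atTop, φ (ψ n) ≤ n ∧ n ≤ φ (ψ n + 1) := by
  classical
  have hex : ∀ n, ∃ j, n < φ j := fun n => (hφ.eventually_gt_atTop n).exists
  refine ⟨fun n => Nat.find (hex n) - 1, tendsto_atTop.2 fun J => ?_, ?_⟩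
  · filter_upwards [(Finset.range (J + 1)).eventually_all.2
      fun j _ => eventually_ge_atTop (φ j)] with n hn
    have : J < Nat.find (hex n) := (Nat.lt_find_iff _ _).2
      fun j hj => not_lt.2 (hn j (Finset.mem_range.2 (by omega)))
    omega
  · filter_upwards [eventually_ge_atTop (φ 0)] with n hn
    have hpos : 0 < Nat.find (hex n) := (Nat.find_pos _).2 (not_lt.2 hn)
    refine ⟨not_lt.1 (Nat.find_min (hex n) (by omega)), ?_⟩
    rw [Nat.sub_add_cancel hpos]
    exact (Nat.find_spec (hex n)).le

variable {g : ℕ → ℝ≥0∞} {φ : ℕ → ℕ} {C : ℝ≥0∞}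

theorem liminf_pos_iff_of_bracket (hφ : Tendsto φ atTop atTop) (hC : C ≠ ⊤)
    (hg : ∀ j m n, φ j ≤ m → m ≤ n → n ≤ φ (j + 1) → g n ≤ C * g m) :
    0 < liminf g atTop ↔ 0 < liminf (g ∘ φ) atTop := by
  refine ⟨fun h => h.trans_le hφ.liminf_le_liminf_comp, fun h => ?_⟩
  obtain ⟨ψ, hψ, hbr⟩ := exists_tendsto_bracket hφ
  have hle : liminf (g ∘ φ) atTop ≤ C * liminf g atTop := calc
    liminf (g ∘ φ) atTop ≤ liminf ((g ∘ φ) ∘ fun n => ψ n + 1) atTop :=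
        ((tendsto_add_atTop_nat 1).comp hψ).liminf_le_liminf_comp
    _ ≤ liminf (fun n => C * g n) atTop :=
        liminf_le_liminf (hbr.mono fun n hn => hg _ _ _ hn.1 hn.2 le_rfl)
    _ = C * liminf g atTop := ENNReal.liminf_const_mul_of_ne_top hC
  exact (ENNReal.mul_pos_iff.1 (h.trans_le hle)).2

theorem limsup_lt_top_iff_of_bracket (hφ : Tendsto φ atTop atTop) (hC : C ≠ ⊤)
    (hg : ∀ j m n, φ j ≤ m → m ≤ n → n ≤ φ (j + 1) → g n ≤ C * g m) :
    limsup g atTop < ⊤ ↔ limsup (g ∘ φ) atTop < ⊤ := by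
  refine ⟨hφ.limsup_comp_le_limsup.trans_lt, fun h => ?_⟩
  obtain ⟨ψ, hψ, hbr⟩ := exists_tendsto_bracket hφ
  calc limsup g atTop ≤ limsup (fun n => C * (g ∘ φ) (ψ n)) atTop :=
        limsup_le_limsup (hbr.mono fun n hn => hg _ _ _ le_rfl hn.1 hn.2)
    _ = C * limsup ((g ∘ φ) ∘ ψ) atTop := ENNReal.limsup_const_mul_of_ne_top hC
    _ ≤ C * limsup (g ∘ φ) atTop := by gcongr; exact hψ.limsup_comp_le_limsup
    _ < ⊤ := ENNReal.mul_lt_top hC.lt_top h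

lemma ofReal_rpow_mul_le {e : ℕ → ℝ} (he0 : ∀ n, 0 ≤ e n) (he : AntitoneOn e (Set.Ici 1))
    {a r : ℝ} (ha : 0 ≤ a) (hr : 0 ≤ r) {D m n : ℕ} (hm : 1 ≤ m) (hmn : m ≤ n)
    (hnD : n ≤ D * m) :
    ENNReal.ofReal ((n : ℝ) ^ a * e n ^ r) ≤
      ENNReal.ofReal ((D : ℝ) ^ a) * ENNReal.ofReal ((m : ℝ) ^ a * e m ^ r) := by
  rw [← ENNReal.ofReal_mul (by positivity)]
  refine ENNReal.ofReal_le_ofReal ?_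
  calc (n : ℝ) ^ a * e n ^ r ≤ ((D : ℝ) * m) ^ a * e m ^ r := by
        gcongr
        · exact Real.rpow_nonneg (he0 n) r
        · exact_mod_cast hnD
        · exact he0 n
        · exact he hm (hm.trans hmn) hmn
    _ = (D : ℝ) ^ a * ((m : ℝ) ^ a * e m ^ r) := by
        rw [Real.mul_rpow (Nat.cast_nonneg _) (Nat.cast_nonneg _)]
        ring

end Bracket

end QM

open QM in
theorem qcoeff_iff_subsequence_general
    {q : ℕ}
    {N : ℕ} (hN : 2 ≤ N)
    (P c : Matrix (Fin N) (Fin N) ℝ) (r : ℝ) (hr : 0 < r)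
    (hP0 : ∀ i j, 0 ≤ P i j)
    (hProw : ∀ i, ∑ j, P i j = 1)
    (hPcard : ∀ i : Fin N, 2 ≤ {j : Fin N | 0 < P i j}.ncard)
    (hc1 : ∀ i j, 0 < P i j → 0 < c i j ∧ c i j < 1)
    (μ : Measure (EuclideanSpace ℝ (Fin q)))
    :
    ∀ s : ℝ, 0 < s →
      ((0 < QM.lowerQCoeff μ r s ↔
        0 < Filter.liminf (fun j : ℕ =>
          ENNReal.ofReal ((QM.phi P c r j : ℝ) ^ (r / s) *
            QM.quantErr μ r (QM.phi P c r j) ^ r)) Filter.atTop) ∧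
      (QM.upperQCoeff μ r s < ⊤ ↔
        Filter.limsup (fun j : ℕ =>
          ENNReal.ofReal ((QM.phi P c r j : ℝ) ^ (r / s) *
            QM.quantErr μ r (QM.phi P c r j) ^ r)) Filter.atTop < ⊤)) := by
  intro s hs
  have : NeZero N := ⟨by omega⟩
  have hbranch : ∀ i, ∃ a b, 0 < P i a ∧ 0 < P i b ∧ a ≠ b := fun i =>
    (Set.one_lt_ncard_iff (Set.toFinite _)).1 (hPcard i)
  obtain ⟨ρ, hW⟩ := exists_weightBounds hr hP0 hProw hc1
    (let ⟨a, _, ha, _⟩ := hbranch 0; ⟨0, a, ha⟩)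
  obtain ⟨D, hD⟩ := hW.exists_phi_succ_le
  have hbracket : ∀ j m n, phi P c r j ≤ m → m ≤ n → n ≤ phi P c r (j + 1) →
      ENNReal.ofReal ((n : ℝ) ^ (r / s) * quantErr μ r n ^ r) ≤
        ENNReal.ofReal ((D : ℝ) ^ (r / s)) * ENNReal.ofReal ((m : ℝ) ^ (r / s) * quantErr μ r m ^ r) :=
    fun j m n hjm hmn hn => ofReal_rpow_mul_le (quantErr_nonneg μ r) (quantErr_antitoneOn μ r)
      (div_pos hr hs).le hr.le (Nat.one_le_two_pow.trans ((hW.two_pow_le_phi hbranch j).trans hjm))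
      hmn (hn.trans ((hD j).trans (Nat.mul_le_mul_left D hjm)))
  exact ⟨liminf_pos_iff_of_bracket (hW.tendsto_phi_atTop hbranch) ENNReal.ofReal_ne_top hbracket,
    limsup_lt_top_iff_of_bracket (hW.tendsto_phi_atTop hbranch) ENNReal.ofReal_ne_top hbracket⟩

open QM in
theorem qcoeff_iff_subsequence
    {q : ℕ}
    {N : ℕ} (hN : 2 ≤ N)
    (P c : Matrix (Fin N) (Fin N) ℝ) (r : ℝ) (hr : 0 < r)
    (hP0 : ∀ i j, 0 ≤ P i j)
    (hProw : ∀ i, ∑ j, P i j = 1)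
    (hPcard : ∀ i : Fin N, 2 ≤ {j : Fin N | 0 < P i j}.ncard)
    (hc1 : ∀ i j, 0 < P i j → 0 < c i j ∧ c i j < 1)
    (hc0 : ∀ i j, P i j = 0 → c i j = 0)
    (J : List (Fin N) → Set (EuclideanSpace ℝ (Fin q)))
    (hJ : ∀ σ : List (Fin N), σ ≠ [] → QM.Adm P σ →
      IsCompact (J σ) ∧ (J σ).Nonempty ∧ J σ = closure (interior (J σ)))
    (hJdiam1 : ∀ i : Fin N, Metric.diam (J [i]) = 1)
    (hJsub : ∀ (σ : List (Fin N)) (a : Fin N), σ ≠ [] → QM.Adm P (σ ++ [a]) →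
      J (σ ++ [a]) ⊆ J σ)
    (hJdisj : ∀ (σ : List (Fin N)) (a b : Fin N), σ ≠ [] → a ≠ b →
      QM.Adm P (σ ++ [a]) → QM.Adm P (σ ++ [b]) →
      Disjoint (interior (J (σ ++ [a]))) (interior (J (σ ++ [b]))))
    (hJdiam : ∀ (σ : List (Fin N)) (a : Fin N) (h : σ ≠ []), QM.Adm P (σ ++ [a]) →
      Metric.diam (J (σ ++ [a])) = c (σ.getLast h) a * Metric.diam (J σ))
    (hsep : ∃ t : ℝ, 0 < t ∧ t < 1 ∧ ∀ (σ : List (Fin N)) (a b : Fin N), σ ≠ [] → a ≠ b →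
      QM.Adm P (σ ++ [a]) → QM.Adm P (σ ++ [b]) →
      ∀ x ∈ J (σ ++ [a]), ∀ y ∈ J (σ ++ [b]),
        t * max (Metric.diam (J (σ ++ [a]))) (Metric.diam (J (σ ++ [b]))) ≤ dist x y)
    (χ : Fin N → ℝ) (hχpos : ∀ i, 0 < χ i) (hχsum : ∑ i, χ i = 1)
    (μ : Measure (EuclideanSpace ℝ (Fin q))) (hprob : IsProbabilityMeasure μ)
    (hμE : μ (⋂ k : ℕ, ⋃ (σ : List (Fin N)) (_ : σ.length = k + 1 ∧ QM.Adm P σ), J σ) = 1)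
    (hμJ : ∀ (σ : List (Fin N)) (h : σ ≠ []), QM.Adm P σ →
      μ (J σ) = ENNReal.ofReal (χ (σ.head h) * QM.wprod P σ))
    :
    ∀ s : ℝ, 0 < s →
      ((0 < QM.lowerQCoeff μ r s ↔
        0 < Filter.liminf (fun j : ℕ =>
          ENNReal.ofReal ((QM.phi P c r j : ℝ) ^ (r / s) *
            QM.quantErr μ r (QM.phi P c r j) ^ r)) Filter.atTop) ∧
      (QM.upperQCoeff μ r s < ⊤ ↔
        Filter.limsup (fun j : ℕ =>
          ENNReal.ofReal ((QM.phi P c r j : ℝ) ^ (r / s) *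
            QM.quantErr μ r (QM.phi P c r j) ^ r)) Filter.atTop < ⊤)) :=
  qcoeff_iff_subsequence_general hN P c r hr hP0 hProw hPcard hc1 μ
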